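/- arXiv:1712.07822 — 5 statements merged into one kernel-verified Lean document; each statement's English description precedes it below -/
import Mathlib

section
/- Let X be a Polish metric space and let d : X × X → ℝ be a continuous symmetric negative definite kernel with d(x, x) = 0 for all x. Then the energy distance E_d (the nonnegative square root of the generalized energy quantity) satisfies the triangle inequality: for all Q, P, R ∈ M¹, E_d(Q, R) ≤ E_d(Q, P) + E_d(P, R), and it is symmetric with E_d(P, P) = 0; that is, E_d is a pseudodistance on M¹. -/
open MeasureTheory TopologicalSpace

/-- The generalized energy quantity
`E_d(Q,P)² = 2 E_{x∼Q,y∼P}[d(x,y)] − E_{x,x'∼Q}[d(x,x')] − E_{y,y'∼P}[d(y,y')]`. -/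
noncomputable def energySq {X : Type*} [MeasurableSpace X] (d : X → X → ℝ)
    (Q P : Measure X) : ℝ :=
  2 * (∫ p, d p.1 p.2 ∂(Q.prod P)) - (∫ p, d p.1 p.2 ∂(Q.prod Q))
    - ∫ p, d p.1 p.2 ∂(P.prod P)

/-- A symmetric function `d` is a negative definite kernel when
`∑ᵢ cᵢ = 0` implies `∑ᵢ∑ⱼ cᵢ cⱼ d(xᵢ, xⱼ) ≤ 0`. -/
def IsNegDefKernel {X : Type*} (d : X → X → ℝ) : Prop :=
  ∀ (n : ℕ) (x : Fin n → X) (c : Fin n → ℝ), (∑ i, c i) = 0 →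
    ∑ i, ∑ j, c i * c j * d (x i) (x j) ≤ 0

section EnergyAux

variable {X : Type*} [MeasurableSpace X]


lemma eval_pair_map {ι : Type*} [Fintype ι] (μ : ι → Measure X)
    [∀ i, IsProbabilityMeasure (μ i)] {p q : ι} (hpq : p ≠ q) :
    Measure.map (fun ω : ι → X => (ω p, ω q)) (Measure.pi μ) = (μ p).prod (μ q) := by
  classical
  refine (Measure.prod_eq fun s t hs ht => ?_).symm
  have hmeas : Measurable fun ω : ι → X => (ω p, ω q) :=
    (measurable_pi_apply p).prodMk (measurable_pi_apply q)
  rw [Measure.map_apply hmeas (hs.prod ht)]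
  have hset : (fun ω : ι → X => (ω p, ω q)) ⁻¹' (s ×ˢ t)
      = Set.pi Set.univ (fun i => if i = p then s else if i = q then t else Set.univ) := by
    ext ω
    simp only [Set.mem_preimage, Set.mem_prod, Set.mem_pi, Set.mem_univ, forall_true_left]
    constructor
    · rintro ⟨h1, h2⟩ i
      by_cases hip : i = p
      · subst hip; simpa using h1
      · by_cases hiq : i = q
        · subst hiq; rw [if_neg hip, if_pos rfl]; exact h2
        · rw [if_neg hip, if_neg hiq]; trivial
    · intro h
      refine ⟨by simpa using h p, ?_⟩
      have := h q
      rwa [if_neg (Ne.symm hpq), if_pos rfl] at this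
  rw [hset, Measure.pi_pi]
  rw [← Finset.mul_prod_erase _ _ (Finset.mem_univ p),
    ← Finset.mul_prod_erase _ _ (Finset.mem_erase.2 ⟨Ne.symm hpq, Finset.mem_univ q⟩),
    Finset.prod_eq_one, mul_one]
  · rw [if_pos rfl, if_neg (Ne.symm hpq), if_pos rfl, mul_comm]  -- check orientation
  · intro i hi
    rw [Finset.mem_erase, Finset.mem_erase] at hi
    rw [if_neg hi.2.1, if_neg hi.1]
    exact measure_univ

lemma integrable_eval_pair {ι : Type*} [Fintype ι] (μ : ι → Measure X)
    [∀ i, IsProbabilityMeasure (μ i)] {p q : ι} (hpq : p ≠ q)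
    {f : X × X → ℝ} (hf : Integrable f ((μ p).prod (μ q))) :
    Integrable (fun ω : ι → X => f (ω p, ω q)) (Measure.pi μ) := by
  have hmeas : Measurable fun ω : ι → X => (ω p, ω q) :=
    (measurable_pi_apply p).prodMk (measurable_pi_apply q)
  have h1 : Integrable f (Measure.map (fun ω : ι → X => (ω p, ω q)) (Measure.pi μ)) := by
    rwa [eval_pair_map μ hpq]
  exact (integrable_map_measure h1.aestronglyMeasurable hmeas.aemeasurable).mp h1

lemma integral_eval_pair {ι : Type*} [Fintype ι] (μ : ι → Measure X)
    [∀ i, IsProbabilityMeasure (μ i)] {p q : ι} (hpq : p ≠ q)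
    {f : X × X → ℝ} (hf : AEStronglyMeasurable f ((μ p).prod (μ q))) :
    ∫ ω, f (ω p, ω q) ∂(Measure.pi μ) = ∫ z, f z ∂((μ p).prod (μ q)) := by
  have hmeas : Measurable fun ω : ι → X => (ω p, ω q) :=
    (measurable_pi_apply p).prodMk (measurable_pi_apply q)
  rw [← eval_pair_map μ hpq] at hf ⊢
  exact (integral_map hmeas.aemeasurable hf).symm

lemma d_nonneg {d : X → X → ℝ} (hsym : ∀ x y, d x y = d y x) (hzero : ∀ x, d x x = 0)
    (hneg : IsNegDefKernel d) (x y : X) : 0 ≤ d x y := by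
  have h := hneg 2 ![x, y] ![1, -1] (by simp [Fin.sum_univ_two])
  simp [Fin.sum_univ_two, hzero] at h
  linarith [hsym x y, h]

lemma key_ineq (d : X → X → ℝ)
    (hzero : ∀ x, d x x = 0) (hd0 : ∀ x y, 0 ≤ d x y) (hneg : IsNegDefKernel d)
    (m : Fin 3 → Measure X) (hm : ∀ i, IsProbabilityMeasure (m i))
    (hint : ∀ i j, Integrable (fun p : X × X => d p.1 p.2) ((m i).prod (m j)))
    (c : Fin 3 → ℝ) (hc : ∑ i, c i = 0) :
    ∑ i, ∑ j, c i * c j * ∫ p, d p.1 p.2 ∂((m i).prod (m j)) ≤ 0 := by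
  classical
  haveI := hm
  set I : Fin 3 → Fin 3 → ℝ := fun i j => ∫ p, d p.1 p.2 ∂((m i).prod (m j)) with hI
  set T : ℝ := ∑ i, ∑ j, c i * c j * I i j with hT
  set B : ℝ := ∑ i, c i ^ 2 * I i i with hB
  have hB0 : 0 ≤ B := Finset.sum_nonneg fun i _ =>
    mul_nonneg (sq_nonneg _) (integral_nonneg fun p => hd0 _ _)
  suffices h : ∀ n : ℕ, 0 < n → T ≤ B / n by
    refine ge_of_tendsto (tendsto_const_div_atTop_nhds_zero_nat B) ?_
    filter_upwards [Filter.eventually_ge_atTop 1] with n hn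
    exact h n hn
  intro n hn
  have hn' : (n : ℝ) ≠ 0 := Nat.cast_ne_zero.2 hn.ne'
  set π : Measure ((Fin 3 × Fin n) → X) := Measure.pi (fun p : Fin 3 × Fin n => m p.1) with hπ
  -- sum transfer
  have h1 : ∀ g : Fin 3 × Fin n → ℝ,
      ∑ k : Fin (3 * n), g (finProdFinEquiv.symm k) = ∑ P : Fin 3 × Fin n, g P :=
    fun g => Equiv.sum_comp finProdFinEquiv.symm g
  -- pointwise negative definiteness
  have hpt : ∀ ω : Fin 3 × Fin n → X,
      ∑ P : Fin 3 × Fin n, ∑ Q : Fin 3 × Fin n,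
        (c P.1 / n) * (c Q.1 / n) * d (ω P) (ω Q) ≤ 0 := by
    intro ω
    have h0 : ∑ k : Fin (3 * n), c ((finProdFinEquiv.symm k).1) / n = 0 := by
      rw [h1 (fun P => c P.1 / n), Fintype.sum_prod_type]
      simp only [Finset.sum_const, Finset.card_univ, Fintype.card_fin, nsmul_eq_mul]
      rw [← hc]
      exact Finset.sum_congr rfl fun i _ => by field_simp
    have h2 := hneg (3 * n) (fun k => ω (finProdFinEquiv.symm k))
      (fun k => c ((finProdFinEquiv.symm k).1) / n) h0
    calc ∑ P : Fin 3 × Fin n, ∑ Q : Fin 3 × Fin n,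
          (c P.1 / n) * (c Q.1 / n) * d (ω P) (ω Q)
        = ∑ P : Fin 3 × Fin n, ∑ l : Fin (3 * n),
            (c P.1 / n) * (c ((finProdFinEquiv.symm l).1) / n) * d (ω P) (ω (finProdFinEquiv.symm l)) :=
          Finset.sum_congr rfl fun P _ => (h1 _).symm
      _ = ∑ k : Fin (3 * n), ∑ l : Fin (3 * n),
            (c ((finProdFinEquiv.symm k).1) / n) * (c ((finProdFinEquiv.symm l).1) / n)
              * d (ω (finProdFinEquiv.symm k)) (ω (finProdFinEquiv.symm l)) := (h1 _).symm
      _ ≤ 0 := h2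
  -- integrability of each term
  have hterm : ∀ P Q : Fin 3 × Fin n,
      Integrable (fun ω : Fin 3 × Fin n → X =>
        (c P.1 / n) * (c Q.1 / n) * d (ω P) (ω Q)) π := by
    intro P Q
    by_cases hPQ : P = Q
    · subst hPQ
      have : (fun ω : Fin 3 × Fin n → X => (c P.1 / n) * (c P.1 / n) * d (ω P) (ω P))
          = fun _ => (0 : ℝ) := funext fun ω => by simp [hzero]
      rw [this]; exact integrable_const 0
    · exact ((integrable_eval_pair (fun p : Fin 3 × Fin n => m p.1) hPQ
        (hint P.1 Q.1)).const_mul _)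
  -- value of the integral
  have hval : ∫ ω, (∑ P : Fin 3 × Fin n, ∑ Q : Fin 3 × Fin n,
        (c P.1 / n) * (c Q.1 / n) * d (ω P) (ω Q)) ∂π
      = ∑ P : Fin 3 × Fin n, ∑ Q : Fin 3 × Fin n,
          (c P.1 / n) * (c Q.1 / n) * (if P = Q then 0 else I P.1 Q.1) := by
    rw [integral_finset_sum _ fun P _ => integrable_finset_sum _ fun Q _ => hterm P Q]
    refine Finset.sum_congr rfl fun P _ => ?_
    rw [integral_finset_sum _ fun Q _ => hterm P Q]
    refine Finset.sum_congr rfl fun Q _ => ?_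
    by_cases hPQ : P = Q
    · subst hPQ; simp [hzero]
    · rw [if_neg hPQ, MeasureTheory.integral_const_mul]
      congr 1
      exact integral_eval_pair (fun p : Fin 3 × Fin n => m p.1) hPQ
        (hint P.1 Q.1).aestronglyMeasurable
  have hle : ∑ P : Fin 3 × Fin n, ∑ Q : Fin 3 × Fin n,
      (c P.1 / n) * (c Q.1 / n) * (if P = Q then 0 else I P.1 Q.1) ≤ 0 := by
    rw [← hval]
    exact integral_nonpos hpt
  -- algebra
  have hsplit : ∑ P : Fin 3 × Fin n, ∑ Q : Fin 3 × Fin n,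
      (c P.1 / n) * (c Q.1 / n) * (if P = Q then 0 else I P.1 Q.1) = T - B / n := by
    have hterm2 : ∀ P Q : Fin 3 × Fin n,
        (c P.1 / n) * (c Q.1 / n) * (if P = Q then 0 else I P.1 Q.1)
        = (c P.1 / n) * (c Q.1 / n) * I P.1 Q.1
          - (if P = Q then (c P.1 / n) * (c Q.1 / n) * I P.1 Q.1 else 0) := by
      intro P Q; split <;> ring
    simp_rw [hterm2, Finset.sum_sub_distrib]
    congr 1
    · rw [Fintype.sum_prod_type, hT]
      refine Finset.sum_congr rfl fun i _ => ?_
      simp only [Fintype.sum_prod_type, Finset.sum_const, Finset.card_univ,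
        Fintype.card_fin, nsmul_eq_mul]
      rw [Finset.mul_sum]
      refine Finset.sum_congr rfl fun j _ => ?_
      field_simp
    · simp only [Finset.sum_ite_eq, Finset.mem_univ, if_true]
      rw [Fintype.sum_prod_type, hB, Finset.sum_div]
      refine Finset.sum_congr rfl fun i _ => ?_
      simp only [Finset.sum_const, Finset.card_univ, Fintype.card_fin, nsmul_eq_mul]
      field_simp
  linarith [hle, hsplit.symm.le, hsplit.le]

end EnergyAux

/-- **The energy distance is a pseudodistance.**
Let `d` be a continuous symmetric negative definite kernel on a Polish metric space with
`d(x,x) = 0`. Then `E_d = sqrt (E_d²)` satisfies the triangle inequality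
`E_d(Q,R) ≤ E_d(Q,P) + E_d(P,R)` on `M¹`, is symmetric, and vanishes on the diagonal. -/

theorem energyDistance_pseudodistance
    {X : Type*} [MetricSpace X] [SeparableSpace X] [CompleteSpace X]
    [MeasurableSpace X] [BorelSpace X]
    (d : X → X → ℝ) (hcont : Continuous fun p : X × X => d p.1 p.2)
    (hsym : ∀ x y, d x y = d y x) (hzero : ∀ x, d x x = 0)
    (hneg : IsNegDefKernel d)
    (Q P R : Measure X)
    [IsProbabilityMeasure Q] [IsProbabilityMeasure P] [IsProbabilityMeasure R]
    (hQQ : Integrable (fun p : X × X => d p.1 p.2) (Q.prod Q))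
    (hPP : Integrable (fun p : X × X => d p.1 p.2) (P.prod P))
    (hRR : Integrable (fun p : X × X => d p.1 p.2) (R.prod R))
    (hQP : Integrable (fun p : X × X => d p.1 p.2) (Q.prod P))
    (hPR : Integrable (fun p : X × X => d p.1 p.2) (P.prod R))
    (hQR : Integrable (fun p : X × X => d p.1 p.2) (Q.prod R)) :
    Real.sqrt (energySq d Q R)
        ≤ Real.sqrt (energySq d Q P) + Real.sqrt (energySq d P R)
      ∧ Real.sqrt (energySq d Q P) = Real.sqrt (energySq d P Q)
      ∧ Real.sqrt (energySq d P P) = 0 := by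
  have hd0 : ∀ x y, 0 ≤ d x y := d_nonneg hsym hzero hneg
  -- swapped integrability
  have hswap : ∀ (μ ν : Measure X) [SFinite μ] [SFinite ν],
      Integrable (fun p : X × X => d p.1 p.2) (μ.prod ν) →
      Integrable (fun p : X × X => d p.1 p.2) (ν.prod μ) := by
    intro μ ν _ _ hf
    have h := hf.swap
    have : ((fun p : X × X => d p.1 p.2) ∘ Prod.swap) = fun p : X × X => d p.1 p.2 :=
      funext fun p => hsym _ _
    rwa [this] at h
  -- symmetry of the double integral
  have hIsym : ∀ (μ ν : Measure X) [SFinite μ] [SFinite ν],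
      ∫ p, d p.1 p.2 ∂(μ.prod ν) = ∫ p, d p.1 p.2 ∂(ν.prod μ) := by
    intro μ ν _ _
    rw [← integral_prod_swap (fun p : X × X => d p.1 p.2) (μ := ν) (ν := μ)]
    exact integral_congr_ae (Filter.Eventually.of_forall fun p => (hsym _ _))
  set iQQ := ∫ p, d p.1 p.2 ∂(Q.prod Q) with hiQQ
  set iPP := ∫ p, d p.1 p.2 ∂(P.prod P) with hiPP
  set iRR := ∫ p, d p.1 p.2 ∂(R.prod R) with hiRR
  set iQP := ∫ p, d p.1 p.2 ∂(Q.prod P) with hiQP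
  set iPR := ∫ p, d p.1 p.2 ∂(P.prod R) with hiPR
  set iQR := ∫ p, d p.1 p.2 ∂(Q.prod R) with hiQR
  -- key quadratic inequality
  have hkey : ∀ t : ℝ,
      0 ≤ (2*iPR - iPP - iRR) * (t*t) + (2*(iQR + iPP - iQP - iPR)) * t
        + (2*iQP - iQQ - iPP) := by
    intro t
    have hm : ∀ i : Fin 3, IsProbabilityMeasure (![Q, P, R] i) := by
      intro i; fin_cases i <;> simp <;> infer_instance
    have hint : ∀ i j : Fin 3,
        Integrable (fun p : X × X => d p.1 p.2) ((![Q, P, R] i).prod (![Q, P, R] j)) := by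
      intro i j
      fin_cases i <;> fin_cases j <;> simp <;>
        first
          | exact hQQ | exact hPP | exact hRR | exact hQP | exact hPR | exact hQR
          | exact hswap _ _ hQP | exact hswap _ _ hPR | exact hswap _ _ hQR
    have h := key_ineq d hzero hd0 hneg ![Q, P, R] hm hint ![1, t - 1, -t]
      (by simp [Fin.sum_univ_three]; try ring)
    simp only [Fin.sum_univ_three] at h
    simp only [Matrix.cons_val_zero, Matrix.cons_val_one, Matrix.head_cons,
      Matrix.cons_val_two, Matrix.tail_cons] at h
    rw [← hiQQ, ← hiPP, ← hiRR, ← hiQP, ← hiPR, ← hiQR] at h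
    have e1 : ∫ p, d p.1 p.2 ∂(P.prod Q) = iQP := (hIsym P Q)
    have e2 : ∫ p, d p.1 p.2 ∂(R.prod P) = iPR := (hIsym R P)
    have e3 : ∫ p, d p.1 p.2 ∂(R.prod Q) = iQR := (hIsym R Q)
    rw [e1, e2, e3] at h
    nlinarith [h]
  -- nonnegativity of b
  have hb : 0 ≤ 2*iPR - iPP - iRR := by
    have hm : ∀ i : Fin 3, IsProbabilityMeasure (![Q, P, R] i) := by
      intro i; fin_cases i <;> simp <;> infer_instance
    have hint : ∀ i j : Fin 3,
        Integrable (fun p : X × X => d p.1 p.2) ((![Q, P, R] i).prod (![Q, P, R] j)) := by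
      intro i j
      fin_cases i <;> fin_cases j <;> simp <;>
        first
          | exact hQQ | exact hPP | exact hRR | exact hQP | exact hPR | exact hQR
          | exact hswap _ _ hQP | exact hswap _ _ hPR | exact hswap _ _ hQR
    have h := key_ineq d hzero hd0 hneg ![Q, P, R] hm hint ![0, 1, -1]
      (by simp [Fin.sum_univ_three])
    simp only [Fin.sum_univ_three] at h
    simp only [Matrix.cons_val_zero, Matrix.cons_val_one, Matrix.head_cons,
      Matrix.cons_val_two, Matrix.tail_cons] at h
    rw [← hiPP, ← hiRR, ← hiPR] at h
    have e2 : ∫ p, d p.1 p.2 ∂(R.prod P) = iPR := (hIsym R P)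
    rw [e2] at h
    linarith
  have ha : 0 ≤ 2*iQP - iQQ - iPP := by have := hkey 0; linarith
  set a := 2*iQP - iQQ - iPP with hadef
  set b := 2*iPR - iPP - iRR with hbdef
  set g := iQR + iPP - iQP - iPR with hgdef
  have hdisc := discrim_le_zero hkey
  rw [discrim] at hdisc
  have hg2 : g^2 ≤ a * b := by nlinarith [hdisc]
  have hg : g ≤ Real.sqrt a * Real.sqrt b := by
    calc g ≤ |g| := le_abs_self g
      _ = Real.sqrt (g^2) := (Real.sqrt_sq_eq_abs g).symm
      _ ≤ Real.sqrt (a*b) := Real.sqrt_le_sqrt hg2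
      _ = Real.sqrt a * Real.sqrt b := Real.sqrt_mul ha _
  have eQR : energySq d Q R = a + b + 2*g := by
    show 2*iQR - iQQ - iRR = _
    rw [hadef, hbdef, hgdef]; ring
  have eQP : energySq d Q P = a := rfl
  have ePR : energySq d P R = b := rfl
  refine ⟨?_, ?_, ?_⟩
  · have h1 : energySq d Q R ≤ (Real.sqrt a + Real.sqrt b)^2 := by
      rw [eQR, add_sq, Real.sq_sqrt ha, Real.sq_sqrt hb]
      nlinarith [hg]
    calc Real.sqrt (energySq d Q R) ≤ Real.sqrt ((Real.sqrt a + Real.sqrt b)^2) :=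
          Real.sqrt_le_sqrt h1
      _ = Real.sqrt a + Real.sqrt b :=
          Real.sqrt_sq (add_nonneg (Real.sqrt_nonneg a) (Real.sqrt_nonneg b))
      _ = Real.sqrt (energySq d Q P) + Real.sqrt (energySq d P R) := by rw [eQP, ePR]
  · have : energySq d Q P = energySq d P Q := by
      show 2*iQP - iQQ - iPP = 2*(∫ p, d p.1 p.2 ∂(P.prod Q)) - iPP - iQQ
      rw [hIsym P Q, ← hiQP]; ring
    rw [this]
  · have : energySq d P P = 0 := by
      show 2*iPP - iPP - iPP = 0
      ring
    rw [this, Real.sqrt_zero]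
end

section
/- Let (X, d) be a Polish metric space and let Q, P be Borel probability measures on X with finite first moments (Q, P ∈ M¹). Then for every coupling π of Q and P, E_d(Q, P)² ≤ 2 ∫ d(x, y) dπ(x, y); consequently E_d(Q, P)² ≤ 2·W₁(Q, P). -/
open MeasureTheory TopologicalSpace

/-- `π` is a coupling of `Q` and `P` : its marginals are `Q` and `P`. -/
def IsCoupling {X : Type*} [MeasurableSpace X] (π : Measure (X × X))
    (Q P : Measure X) : Prop :=
  π.map Prod.fst = Q ∧ π.map Prod.snd = P

/-- The 1-Wasserstein distance: infimum of `∫ d(x,y) dπ` over couplings `π` of `Q, P`. -/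
noncomputable def W1 {X : Type*} [MetricSpace X] [MeasurableSpace X]
    (Q P : Measure X) : ℝ :=
  sInf {r | ∃ π : Measure (X × X), IsCoupling π Q P ∧ r = ∫ p, dist p.1 p.2 ∂π}

section Aux

variable {X : Type*} [MetricSpace X] [SeparableSpace X] [MeasurableSpace X] [BorelSpace X]

lemma ec_meas : Measurable (fun p : X × X => dist p.1 p.2) :=
  haveI : SecondCountableTopology X := UniformSpace.secondCountable_of_separable X
  measurable_fst.dist measurable_snd

/-- A coupling of probability measures is a probability measure. -/
lemma ec_prob {π : Measure (X × X)} {Q P : Measure X} [IsProbabilityMeasure Q]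
    (hπ : IsCoupling π Q P) : IsProbabilityMeasure π := by
  constructor
  have : (π.map Prod.fst) Set.univ = 1 := by rw [hπ.1]; simp
  rwa [Measure.map_apply measurable_fst MeasurableSet.univ, Set.preimage_univ] at this

/-- Integrability of `dist` on a coupling, given first moments at base points. -/
lemma ec_int {π : Measure (X × X)} {Q P : Measure X} [IsProbabilityMeasure Q]
    [IsProbabilityMeasure P] (hπ : IsCoupling π Q P) {x0 y0 : X}
    (hx : Integrable (fun x => dist x x0) Q) (hy : Integrable (fun y => dist y0 y) P) :
    Integrable (fun p : X × X => dist p.1 p.2) π := by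
  have : IsProbabilityMeasure π := ec_prob hπ
  have h1 : Integrable (fun p : X × X => dist p.1 x0) π := by
    have := hπ.1 ▸ hx
    exact (integrable_map_measure this.aestronglyMeasurable measurable_fst.aemeasurable).mp this
  have h2 : Integrable (fun p : X × X => dist y0 p.2) π := by
    have := hπ.2 ▸ hy
    exact (integrable_map_measure this.aestronglyMeasurable measurable_snd.aemeasurable).mp this
  refine ((h1.add h2).add (integrable_const (dist x0 y0))).mono'
    (ec_meas.aestronglyMeasurable) (Filter.Eventually.of_forall fun p => ?_)
  have := dist_triangle4 p.1 x0 y0 p.2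
  rw [Real.norm_eq_abs, abs_of_nonneg dist_nonneg]
  calc dist p.1 p.2 ≤ dist p.1 x0 + dist x0 y0 + dist y0 p.2 := this
    _ ≤ dist p.1 x0 + dist y0 p.2 + dist x0 y0 := by ring_nf; rfl

/-- Pull integral along a marginal map. -/
lemma ec_integral_map {π : Measure (X × X)} {ρ : Measure X × Measure X}
    {g : (X × X) × (X × X) → X × X} (hg : Measurable g)
    {ν : Measure ((X × X) × (X × X))} {σ : Measure (X × X)} (h : ν.map g = σ) :
    ∫ p, dist p.1 p.2 ∂σ = ∫ a, dist (g a).1 (g a).2 ∂ν := by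
  rw [← h, integral_map hg.aemeasurable ec_meas.aestronglyMeasurable]

end Aux

/-- **The squared energy distance is bounded by twice the 1-Wasserstein distance.**
For `Q, P ∈ M¹` on a Polish metric space `(X, dist)`: for every coupling `π` of `Q` and
`P`, `E_d(Q,P)² ≤ 2 ∫ dist(x,y) dπ`; consequently `E_d(Q,P)² ≤ 2 W₁(Q,P)`. -/
theorem energySq_le_two_mul_wasserstein
    {X : Type*} [MetricSpace X] [SeparableSpace X] [CompleteSpace X]
    [MeasurableSpace X] [BorelSpace X]
    (Q P : Measure X) [IsProbabilityMeasure Q] [IsProbabilityMeasure P]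
    (hQ : Integrable (fun p : X × X => dist p.1 p.2) (Q.prod Q))
    (hP : Integrable (fun p : X × X => dist p.1 p.2) (P.prod P)) :
    (∀ π : Measure (X × X), IsCoupling π Q P →
        energySq (fun x y => dist x y) Q P ≤ 2 * ∫ p, dist p.1 p.2 ∂π)
      ∧ energySq (fun x y => dist x y) Q P ≤ 2 * W1 Q P := by
  -- base points with finite first moments
  obtain ⟨x0, hx0⟩ : ∃ x0, Integrable (fun x => dist x x0) Q := by
    have := hQ.prod_left_ae
    obtain ⟨x0, hx0⟩ := this.exists
    exact ⟨x0, hx0⟩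
  obtain ⟨y0, hy0⟩ : ∃ y0, Integrable (fun y => dist y0 y) P := by
    have := hP.prod_right_ae
    obtain ⟨y0, hy0⟩ := this.exists
    exact ⟨y0, hy0⟩
  have hQP : IsCoupling (Q.prod P) Q P := by
    constructor
    · rw [Measure.map_fst_prod]; simp
    · rw [Measure.map_snd_prod]; simp
  have hQPint : Integrable (fun p : X × X => dist p.1 p.2) (Q.prod P) := ec_int hQP hx0 hy0
  have main : ∀ π : Measure (X × X), IsCoupling π Q P →
      energySq (fun x y => dist x y) Q P ≤ 2 * ∫ p, dist p.1 p.2 ∂π := by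
    intro π hπ
    have hπprob : IsProbabilityMeasure π := ec_prob hπ
    have hπint : Integrable (fun p : X × X => dist p.1 p.2) π := ec_int hπ hx0 hy0
    set ν : Measure ((X × X) × (X × X)) := π.prod π with hν
    have : IsProbabilityMeasure ν := by infer_instance
    -- the four marginal maps
    have mQP : ν.map (fun a => ((a.1.1, a.2.2) : X × X)) = Q.prod P := by
      have : (fun a : (X × X) × (X × X) => ((a.1.1, a.2.2) : X × X))
          = Prod.map Prod.fst Prod.snd := rfl
      rw [this, ← Measure.map_prod_map _ _ measurable_fst measurable_snd, hπ.1, hπ.2]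
    have mQQ : ν.map (fun a => ((a.1.1, a.2.1) : X × X)) = Q.prod Q := by
      have : (fun a : (X × X) × (X × X) => ((a.1.1, a.2.1) : X × X))
          = Prod.map Prod.fst Prod.fst := rfl
      rw [this, ← Measure.map_prod_map _ _ measurable_fst measurable_fst, hπ.1]
    have mPP : ν.map (fun a => ((a.1.2, a.2.2) : X × X)) = P.prod P := by
      have : (fun a : (X × X) × (X × X) => ((a.1.2, a.2.2) : X × X))
          = Prod.map Prod.snd Prod.snd := rfl
      rw [this, ← Measure.map_prod_map _ _ measurable_snd measurable_snd, hπ.2]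
    have mπ1 : ν.map Prod.fst = π := by
      rw [hν, Measure.map_fst_prod]; simp
    have mπ2 : ν.map Prod.snd = π := by
      rw [hν, Measure.map_snd_prod]; simp
    -- measurability of the maps
    have gQP : Measurable (fun a : (X × X) × (X × X) => ((a.1.1, a.2.2) : X × X)) :=
      (measurable_fst.fst).prodMk (measurable_snd.snd)
    have gQQ : Measurable (fun a : (X × X) × (X × X) => ((a.1.1, a.2.1) : X × X)) :=
      (measurable_fst.fst).prodMk (measurable_snd.fst)
    have gPP : Measurable (fun a : (X × X) × (X × X) => ((a.1.2, a.2.2) : X × X)) :=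
      (measurable_fst.snd).prodMk (measurable_snd.snd)
    -- integrability of the composed functions on ν
    have pull : ∀ (g : (X × X) × (X × X) → X × X), Measurable g →
        ∀ (σ : Measure (X × X)), ν.map g = σ →
        Integrable (fun p : X × X => dist p.1 p.2) σ →
        (∫ p, dist p.1 p.2 ∂σ = ∫ a, dist (g a).1 (g a).2 ∂ν) ∧
          Integrable (fun a => dist (g a).1 (g a).2) ν := by
      intro g hg σ hσ hint
      constructor
      · rw [← hσ, integral_map hg.aemeasurable ec_meas.aestronglyMeasurable]
      · have := hσ ▸ hint
        have h2 := (integrable_map_measure this.aestronglyMeasurable hg.aemeasurable).mp this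
        exact h2
    obtain ⟨eQP, iQP⟩ := pull _ gQP _ mQP hQPint
    obtain ⟨eQQ, iQQ⟩ := pull _ gQQ _ mQQ hQ
    obtain ⟨ePP, iPP⟩ := pull _ gPP _ mPP hP
    dsimp only at eQP iQP eQQ iQQ ePP iPP
    obtain ⟨eπ1, iπ1⟩ := pull _ measurable_fst _ mπ1 hπint
    obtain ⟨eπ2, iπ2⟩ := pull _ measurable_snd _ mπ2 hπint
    -- key pointwise inequality, integrated
    have key : 2 * ∫ p, dist p.1 p.2 ∂(Q.prod P) ≤
        (∫ p, dist p.1 p.2 ∂(Q.prod Q)) + (∫ p, dist p.1 p.2 ∂(P.prod P))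
          + 2 * ∫ p, dist p.1 p.2 ∂π := by
      rw [eQP, eQQ, ePP]
      have h1 : 2 * ∫ a, dist (a.1.1 : X) a.2.2 ∂ν = ∫ a, 2 * dist (a.1.1 : X) a.2.2 ∂ν := by
        rw [integral_const_mul]
      have hsum : ∫ a, (dist (a.1.1 : X) a.2.1 + dist (a.1.2 : X) a.2.2
            + (dist (a.1.1 : X) a.1.2 + dist (a.2.1 : X) a.2.2)) ∂ν
          = (∫ a, dist (a.1.1 : X) a.2.1 ∂ν) + (∫ a, dist (a.1.2 : X) a.2.2 ∂ν)
            + ((∫ a, dist (a.1.1 : X) a.1.2 ∂ν) + ∫ a, dist (a.2.1 : X) a.2.2 ∂ν) := by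
        have hA : ∫ a, (dist (a.1.1 : X) a.2.1 + dist (a.1.2 : X) a.2.2) ∂ν
            = (∫ a, dist (a.1.1 : X) a.2.1 ∂ν) + ∫ a, dist (a.1.2 : X) a.2.2 ∂ν :=
          integral_add iQQ iPP
        have hB : ∫ a, (dist (a.1.1 : X) a.1.2 + dist (a.2.1 : X) a.2.2) ∂ν
            = (∫ a, dist (a.1.1 : X) a.1.2 ∂ν) + ∫ a, dist (a.2.1 : X) a.2.2 ∂ν :=
          integral_add iπ1 iπ2
        have hC : ∫ a, (dist (a.1.1 : X) a.2.1 + dist (a.1.2 : X) a.2.2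
              + (dist (a.1.1 : X) a.1.2 + dist (a.2.1 : X) a.2.2)) ∂ν
            = (∫ a, (dist (a.1.1 : X) a.2.1 + dist (a.1.2 : X) a.2.2) ∂ν)
              + ∫ a, (dist (a.1.1 : X) a.1.2 + dist (a.2.1 : X) a.2.2) ∂ν :=
          integral_add (iQQ.add iPP) (iπ1.add iπ2)
        rw [hC, hA, hB]
      have mono : ∫ a, 2 * dist (a.1.1 : X) a.2.2 ∂ν ≤
          ∫ a, (dist (a.1.1 : X) a.2.1 + dist (a.1.2 : X) a.2.2
            + (dist (a.1.1 : X) a.1.2 + dist (a.2.1 : X) a.2.2)) ∂ν := by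
        refine integral_mono (iQP.const_mul 2) ((iQQ.add iPP).add (iπ1.add iπ2)) fun a => ?_
        have t1 : dist (a.1.1 : X) a.2.2 ≤ dist a.1.1 a.2.1 + dist a.2.1 a.2.2 :=
          dist_triangle _ _ _
        have t2 : dist (a.1.1 : X) a.2.2 ≤ dist a.1.1 a.1.2 + dist a.1.2 a.2.2 :=
          dist_triangle _ _ _
        linarith
      rw [h1]
      calc ∫ a, 2 * dist (a.1.1 : X) a.2.2 ∂ν
          ≤ _ := mono
        _ = _ := hsum
        _ = (∫ a, dist (a.1.1 : X) a.2.1 ∂ν) + (∫ a, dist (a.1.2 : X) a.2.2 ∂ν)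
            + 2 * ∫ p, dist p.1 p.2 ∂π := by
              rw [eπ2.symm.trans eπ1, ← eπ1]; ring
    simp only [energySq]
    linarith
  refine ⟨main, ?_⟩
  have hne : {r | ∃ π : Measure (X × X), IsCoupling π Q P ∧ r = ∫ p, dist p.1 p.2 ∂π}.Nonempty :=
    ⟨∫ p, dist p.1 p.2 ∂(Q.prod P), Q.prod P, hQP, rfl⟩
  have hlb : ∀ r ∈ {r | ∃ π : Measure (X × X), IsCoupling π Q P ∧ r = ∫ p, dist p.1 p.2 ∂π},
      energySq (fun x y => dist x y) Q P / 2 ≤ r := by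
    rintro r ⟨π, hπ, rfl⟩
    linarith [main π hπ]
  have := le_csInf hne hlb
  rw [W1]
  linarith
end

section
/- Let X be a Polish metric space, let d : X × X → ℝ be a symmetric measurable function with d(x, x) = 0 for all x ∈ X, and let Q, P be Borel probability measures on X for which all relevant integrals of d are finite. Let x₁, …, xₙ be n independent Q-distributed random variables and let Q_n = (1/n) ∑ᵢ δ_{xᵢ} be the empirical measure. Then E_{x₁…xₙ∼Q}[ E_d(Q_n, P)² ] = E_d(Q, P)² + (1/n)·E_{x,x'∼Q}[ d(x, x') ]. -/
open MeasureTheory TopologicalSpace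
open scoped ENNReal

/-- The empirical measure `Q_n = (1/n) ∑ᵢ δ_{xᵢ}` of a sample `x : Fin n → X`. -/
noncomputable def empiricalMeasure {X : Type*} [MeasurableSpace X] {n : ℕ}
    (x : Fin n → X) : Measure X :=
  (n : ℝ≥0∞)⁻¹ • ∑ i, Measure.dirac (x i)


/-!
Integrating against the empirical measure turns `E_d(Q_n, P)²` into
`(2/n) ∑ᵢ ∫ d(xᵢ, y) dP(y) − (1/n²) ∑ᵢ ∑ⱼ d(xᵢ, xⱼ) − E_{P⊗P} d`.
In expectation each term of the first sum equals `E_{Q⊗P} d`. In the double sum the `n`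
diagonal terms vanish since `d(x, x) = 0`, and each of the `n(n − 1)` off-diagonal terms has
mean `E_{Q⊗Q} d` because distinct coordinates of an i.i.d. sample are independent. The
missing diagonal is the bias `(n² − n(n − 1)) / n² · E_{Q⊗Q} d = E_{Q⊗Q} d / n`.
-/

open ProbabilityTheory Finset

section Empirical

variable {X Y E : Type*} [MeasurableSpace X] [MeasurableSpace Y] [NormedAddCommGroup E] {n : ℕ}

instance isFiniteMeasure_empiricalMeasure (x : Fin n → X) :
    IsFiniteMeasure (empiricalMeasure x) := by
  rcases eq_or_ne n 0 with rfl | hn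
  · simp only [empiricalMeasure, univ_eq_empty, sum_empty, smul_zero]
    infer_instance
  · exact ⟨by simp [empiricalMeasure, ENNReal.inv_mul_cancel, hn]⟩

lemma empiricalMeasure_prod (x : Fin n → X) (ν : Measure Y) [SFinite ν] :
    (empiricalMeasure x).prod ν = (n : ℝ≥0∞)⁻¹ • ∑ i, ν.map (Prod.mk (x i)) := by
  simp only [empiricalMeasure, Measure.prod_smul_left, ← Measure.sum_fintype,
    Measure.prod_sum_left, Measure.dirac_prod]

lemma integrable_empiricalMeasure {f : X → E} (hf : StronglyMeasurable f) (x : Fin n → X) :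
    Integrable f (empiricalMeasure x) := by
  rcases eq_or_ne n 0 with rfl | hn
  · simp [empiricalMeasure]
  · exact (integrable_finsetSum_measure.2 fun i _ =>
      integrable_dirac' hf enorm_lt_top).smul_measure (ENNReal.inv_ne_top.2 (Nat.cast_ne_zero.2 hn))

variable [NormedSpace ℝ E]

lemma integral_empiricalMeasure_prod {f : X × Y → E} (hf : StronglyMeasurable f)
    (x : Fin n → X) {ν : Measure Y} [SFinite ν]
    (hx : ∀ i, Integrable (fun y => f (x i, y)) ν) :
    ∫ p, f p ∂((empiricalMeasure x).prod ν) = (n : ℝ)⁻¹ • ∑ i, ∫ y, f (x i, y) ∂ν := by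
  have hmap : ∀ i, Integrable f (ν.map (Prod.mk (x i))) := fun i =>
    (integrable_map_measure hf.aestronglyMeasurable measurable_prodMk_left.aemeasurable).2 (hx i)
  rw [empiricalMeasure_prod, integral_smul_measure, integral_finsetSum_measure fun i _ => hmap i]
  simp only [ENNReal.toReal_inv, ENNReal.toReal_natCast]
  congr 2 with i
  exact integral_map measurable_prodMk_left.aemeasurable hf.aestronglyMeasurable

variable [CompleteSpace E]

lemma integral_empiricalMeasure {f : X → E} (hf : StronglyMeasurable f) (x : Fin n → X) :
    ∫ a, f a ∂(empiricalMeasure x) = (n : ℝ)⁻¹ • ∑ i, f (x i) := by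
  rw [empiricalMeasure, integral_smul_measure,
    integral_finsetSum_measure fun i _ => integrable_dirac' hf enorm_lt_top]
  simp [integral_dirac' _ _ hf]

lemma integral_empiricalMeasure_prod_empiricalMeasure {m : ℕ} {f : X × Y → E}
    (hf : StronglyMeasurable f) (x : Fin n → X) (y : Fin m → Y) :
    ∫ p, f p ∂((empiricalMeasure x).prod (empiricalMeasure y))
      = (n : ℝ)⁻¹ • ∑ i, (m : ℝ)⁻¹ • ∑ j, f (x i, y j) := by
  have hsec : ∀ a, StronglyMeasurable fun b => f (a, b) := fun a =>
    hf.comp_measurable measurable_prodMk_left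
  rw [integral_empiricalMeasure_prod hf x fun i => integrable_empiricalMeasure (hsec _) y]
  simp only [integral_empiricalMeasure (hsec _)]

end Empirical

lemma energySq_empiricalMeasure {X : Type*} [MeasurableSpace X] {d : X → X → ℝ}
    (hd : Measurable fun p : X × X => d p.1 p.2) {n : ℕ} (x : Fin n → X) (P : Measure X)
    [SFinite P] (hx : ∀ i, Integrable (d (x i)) P) :
    energySq d (empiricalMeasure x) P
      = 2 * ((n : ℝ)⁻¹ * ∑ i, ∫ y, d (x i) y ∂P)
        - (n : ℝ)⁻¹ * (n : ℝ)⁻¹ * ∑ i, ∑ j, d (x i) (x j) - ∫ p, d p.1 p.2 ∂(P.prod P) := by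
  rw [energySq, integral_empiricalMeasure_prod hd.stronglyMeasurable x hx,
    integral_empiricalMeasure_prod_empiricalMeasure hd.stronglyMeasurable]
  simp only [smul_eq_mul, mul_sum, mul_assoc]

lemma measurePreserving_eval_pair {ι : Type*} [Fintype ι] {Ω : ι → Type*}
    [∀ i, MeasurableSpace (Ω i)] (μ : ∀ i, Measure (Ω i)) [∀ i, IsProbabilityMeasure (μ i)]
    {i j : ι} (hij : i ≠ j) :
    MeasurePreserving (fun x : ∀ i, Ω i => (x i, x j)) (Measure.pi μ) ((μ i).prod (μ j)) := by
  refine ⟨by fun_prop, ?_⟩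
  have hindep := (iIndepFun_pi (X := fun _ => id) (μ := μ) fun _ => aemeasurable_id).indepFun hij
  exact (hindep.map_prod_eq_prod_map_map (measurable_pi_apply i).aemeasurable
      (measurable_pi_apply j).aemeasurable).trans
    (congr_arg₂ _ (measurePreserving_eval μ i).map_eq (measurePreserving_eval μ j).map_eq)

section Sample

variable {ι Ω E : Type*} [Fintype ι] [MeasurableSpace Ω] {μ : Measure Ω} [IsProbabilityMeasure μ]
  [NormedAddCommGroup E]

lemma integrable_comp_eval_pair {d : Ω → Ω → E} (hzero : ∀ a, d a a = 0)
    (hd : Integrable (fun p : Ω × Ω => d p.1 p.2) (μ.prod μ)) (i j : ι) :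
    Integrable (fun x : ι → Ω => d (x i) (x j)) (Measure.pi fun _ => μ) := by
  rcases eq_or_ne i j with rfl | hij
  · simp [hzero]
  · exact (measurePreserving_eval_pair (fun _ => μ) hij).integrable_comp_of_integrable hd

variable [NormedSpace ℝ E]

lemma integral_sum_comp_eval {f : Ω → E} (hf : Integrable f μ) :
    ∫ x : ι → Ω, ∑ i, f (x i) ∂(Measure.pi fun _ => μ) = Fintype.card ι • ∫ a, f a ∂μ := by
  rw [integral_finsetSum _ fun i _ => integrable_comp_eval hf]
  simp [integral_comp_eval (μ := fun _ => μ) hf.aestronglyMeasurable]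

lemma integral_sum_sum_comp_eval_pair {d : Ω → Ω → E} (hzero : ∀ a, d a a = 0)
    (hd : Integrable (fun p : Ω × Ω => d p.1 p.2) (μ.prod μ)) :
    ∫ x : ι → Ω, ∑ i, ∑ j, d (x i) (x j) ∂(Measure.pi fun _ => μ)
      = (Fintype.card ι * (Fintype.card ι - 1)) • ∫ p, d p.1 p.2 ∂(μ.prod μ) := by
  classical
  have hoff {i j : ι} (hij : i ≠ j) :
      ∫ x : ι → Ω, d (x i) (x j) ∂(Measure.pi fun _ => μ) = ∫ p, d p.1 p.2 ∂(μ.prod μ) := by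
    rw [← (measurePreserving_eval_pair (fun _ => μ) hij).map_eq] at hd ⊢
    exact (integral_map (by fun_prop) hd.aestronglyMeasurable).symm
  have hrow (i : ι) : ∫ x : ι → Ω, ∑ j, d (x i) (x j) ∂(Measure.pi fun _ => μ)
      = (Fintype.card ι - 1) • ∫ p, d p.1 p.2 ∂(μ.prod μ) := by
    rw [integral_finsetSum _ fun j _ => integrable_comp_eval_pair hzero hd i j,
      ← sum_erase_add _ _ (mem_univ i), sum_congr rfl fun j hj => hoff (ne_of_mem_erase hj).symm]
    simp [hzero, card_erase_of_mem]
  rw [integral_finsetSum _ fun i _ => integrable_finsetSum _ fun j _ =>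
    integrable_comp_eval_pair hzero hd i j]
  simp [hrow, mul_nsmul']

end Sample

theorem expectation_energySq_empirical_general
    {X : Type*}
    [MeasurableSpace X]
    (d : X → X → ℝ) (hd : Measurable fun p : X × X => d p.1 p.2)
    (hzero : ∀ x, d x x = 0)
    (Q P : Measure X) [IsProbabilityMeasure Q] [IsProbabilityMeasure P]
    (hQQ : Integrable (fun p : X × X => d p.1 p.2) (Q.prod Q))
    (hQP : Integrable (fun p : X × X => d p.1 p.2) (Q.prod P))
    (n : ℕ) (hn : 0 < n) :
    ∫ x : Fin n → X, energySq d (empiricalMeasure x) P ∂(Measure.pi fun _ => Q)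
      = energySq d Q P + (1 / n) * ∫ p, d p.1 p.2 ∂(Q.prod Q) := by
  set π := Measure.pi fun _ : Fin n => Q
  have hsec : ∀ᵐ x ∂π, ∀ i, Integrable (d (x i)) P := ae_all_iff.2 fun i =>
    (measurePreserving_eval (fun _ => Q) i).quasiMeasurePreserving.ae
      (p := fun a => Integrable (d a) P) hQP.prod_right_ae
  have hJ : Integrable (fun a => ∫ y, d a y ∂P) Q := hQP.integral_prod_left
  have hfirst : Integrable (fun x : Fin n → X => 2 * ((n : ℝ)⁻¹ * ∑ i, ∫ y, d (x i) y ∂P)) π :=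
    ((integrable_finsetSum _ fun i _ =>
      integrable_comp_eval (μ := fun _ => Q) (i := i) hJ).const_mul _).const_mul _
  have hsecond :
      Integrable (fun x : Fin n → X => (n : ℝ)⁻¹ * (n : ℝ)⁻¹ * ∑ i, ∑ j, d (x i) (x j)) π :=
    (integrable_finsetSum _ fun i _ => integrable_finsetSum _ fun j _ =>
      integrable_comp_eval_pair hzero hQQ i j).const_mul _
  rw [integral_congr_ae (hsec.mono fun x hx => energySq_empiricalMeasure hd x P hx),
    integral_sub (f := fun x => _ - _) (hfirst.sub hsecond) (integrable_const _),
    integral_sub hfirst hsecond,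
    integral_const_mul, integral_const_mul, integral_const_mul, integral_sum_comp_eval hJ,
    integral_sum_sum_comp_eval_pair hzero hQQ, energySq, integral_prod _ hQP]
  simp only [Fintype.card_fin, nsmul_eq_mul, integral_const, probReal_univ, one_smul]
  have hn₀ : (n : ℝ) ≠ 0 := by positivity
  rw [Nat.cast_mul, Nat.cast_sub hn]
  field_simp
  ring

/-- **Exact bias of the empirical squared energy distance (V-statistic).**
Let `d` be a symmetric measurable kernel with `d(x,x) = 0` on a Polish metric space, and
let `Q, P` be Borel probability measures for which all relevant integrals of `d` are
finite. Drawing `x₁, …, xₙ` i.i.d. from `Q` and letting `Q_n` be the empirical measure,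
`E_{x₁…xₙ∼Q}[ E_d(Q_n, P)² ] = E_d(Q, P)² + (1/n) E_{x,x'∼Q}[d(x,x')]`. -/
theorem expectation_energySq_empirical
    {X : Type*} [MetricSpace X] [SeparableSpace X] [CompleteSpace X]
    [MeasurableSpace X] [BorelSpace X]
    (d : X → X → ℝ) (hd : Measurable fun p : X × X => d p.1 p.2)
    (hsym : ∀ x y, d x y = d y x) (hzero : ∀ x, d x x = 0)
    (Q P : Measure X) [IsProbabilityMeasure Q] [IsProbabilityMeasure P]
    (hQQ : Integrable (fun p : X × X => d p.1 p.2) (Q.prod Q))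
    (hPP : Integrable (fun p : X × X => d p.1 p.2) (P.prod P))
    (hQP : Integrable (fun p : X × X => d p.1 p.2) (Q.prod P))
    (n : ℕ) (hn : 0 < n) :
    ∫ x : Fin n → X, energySq d (empiricalMeasure x) P ∂(Measure.pi fun _ => Q)
      = energySq d Q P + (1 / n) * ∫ p, d p.1 p.2 ∂(Q.prod Q) :=
  expectation_energySq_empirical_general d hd hzero Q P hQQ hQP n hn
end

section
/- Let X be a Polish metric space, H a real Hilbert space, and Φ : X → H a measurable map. Let 𝔐 be a set of Borel probability measures on X for which Φ is Bochner integrable, closed under convex combinations, and suppose the mean embedding m : P ∈ 𝔐 ↦ ∫ Φ dP ∈ H is injective on 𝔐. Define E(Q, P) = ‖ m(Q) − m(P) ‖_H. Let P₀, P₁ ∈ 𝔐 with D = E(P₀, P₁) < ∞ and let t ∈ [0, 1]. If P ∈ 𝔐 satisfies E(P₀, P) = t·D and E(P, P₁) = (1 − t)·D, then P = (1 − t)·P₀ + t·P₁. Consequently the mixture curve is the unique constant speed minimal geodesic joining P₀ and P₁ for the distance E. -/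
open MeasureTheory TopologicalSpace

/-! The mean embedding is affine in the measure, so the mixture `(1 - t)·P₀ + t·P₁` is mapped to
the point `(1 - t)·m(P₀) + t·m(P₁)`. In the strictly convex space `H` this is the only point at
distances `t·D` and `(1 - t)·D` from `m(P₀)` and `m(P₁)`, so `m(P)` equals it and injectivity
of `m` on `𝔐` gives `P = (1 - t)·P₀ + t·P₁`. -/

theorem integral_ofReal_smul_add_ofReal_smul_measure {α G : Type*} [MeasurableSpace α]
    [NormedAddCommGroup G] [NormedSpace ℝ G] {f : α → G} {μ ν : Measure α}
    (hμ : Integrable f μ) (hν : Integrable f ν) {s t : ℝ} (hs : 0 ≤ s) (ht : 0 ≤ t) :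
    ∫ x, f x ∂(ENNReal.ofReal s • μ + ENNReal.ofReal t • ν)
      = s • ∫ x, f x ∂μ + t • ∫ x, f x ∂ν := by
  rw [integral_add_measure (hμ.smul_measure ENNReal.ofReal_ne_top)
      (hν.smul_measure ENNReal.ofReal_ne_top),
    integral_smul_measure, integral_smul_measure, ENNReal.toReal_ofReal hs,
    ENNReal.toReal_ofReal ht]

theorem mmd_geodesic_is_mixture_general
    {X : Type*} [MeasurableSpace X]
    {H : Type*} [NormedAddCommGroup H] [InnerProductSpace ℝ H]
    (Φ : X → H)
    (𝔐 : Set (Measure X))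
    (hint : ∀ P ∈ 𝔐, Integrable Φ P)
    (hconv : ∀ P₀ ∈ 𝔐, ∀ P₁ ∈ 𝔐, ∀ t ∈ Set.Icc (0 : ℝ) 1,
      (ENNReal.ofReal (1 - t) • P₀ + ENNReal.ofReal t • P₁) ∈ 𝔐)
    (hinj : ∀ P ∈ 𝔐, ∀ P' ∈ 𝔐, (∫ x, Φ x ∂P) = (∫ x, Φ x ∂P') → P = P')
    (P₀ : Measure X) (hP₀ : P₀ ∈ 𝔐) (P₁ : Measure X) (hP₁ : P₁ ∈ 𝔐)
    (t : ℝ) (ht : t ∈ Set.Icc (0 : ℝ) 1)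
    (P : Measure X) (hP : P ∈ 𝔐)
    (h0 : ‖(∫ x, Φ x ∂P₀) - ∫ x, Φ x ∂P‖
        = t * ‖(∫ x, Φ x ∂P₀) - ∫ x, Φ x ∂P₁‖)
    (h1 : ‖(∫ x, Φ x ∂P) - ∫ x, Φ x ∂P₁‖
        = (1 - t) * ‖(∫ x, Φ x ∂P₀) - ∫ x, Φ x ∂P₁‖) :
    P = ENNReal.ofReal (1 - t) • P₀ + ENNReal.ofReal t • P₁ := by
  have hmean_P : ∫ x, Φ x ∂P = AffineMap.lineMap (∫ x, Φ x ∂P₀) (∫ x, Φ x ∂P₁) t := by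
    apply eq_lineMap_of_dist_eq_mul_of_dist_eq_mul <;> simpa only [dist_eq_norm]
  have hmean_mix : ∫ x, Φ x ∂(ENNReal.ofReal (1 - t) • P₀ + ENNReal.ofReal t • P₁)
      = AffineMap.lineMap (∫ x, Φ x ∂P₀) (∫ x, Φ x ∂P₁) t := by
    rw [AffineMap.lineMap_apply_module, integral_ofReal_smul_add_ofReal_smul_measure
      (hint P₀ hP₀) (hint P₁ hP₁) (sub_nonneg.mpr ht.2) ht.1]
  exact hinj P hP _ (hconv P₀ hP₀ P₁ hP₁ t ht) (hmean_P.trans hmean_mix.symm)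

/-- **Uniqueness of MMD geodesics: they are mixtures.**
Let `Φ : X → H` be a measurable map into a real Hilbert space, `𝔐` a set of Borel
probability measures on which `Φ` is Bochner integrable, closed under convex
combinations, and on which the mean embedding `m : P ↦ ∫ Φ dP` is injective. Set
`E(Q,P) = ‖m(Q) − m(P)‖`. If `P₀, P₁ ∈ 𝔐`, `D = E(P₀,P₁)`, `t ∈ [0,1]`, and `P ∈ 𝔐`
satisfies `E(P₀,P) = t·D` and `E(P,P₁) = (1−t)·D`, then `P = (1−t)·P₀ + t·P₁`; hence the
mixture curve is the unique constant speed minimal geodesic joining `P₀` and `P₁`. -/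
theorem mmd_geodesic_is_mixture
    {X : Type*} [MetricSpace X] [SeparableSpace X] [CompleteSpace X]
    [MeasurableSpace X] [BorelSpace X]
    {H : Type*} [NormedAddCommGroup H] [InnerProductSpace ℝ H] [CompleteSpace H]
    [MeasurableSpace H] [BorelSpace H]
    (Φ : X → H) (hΦ : Measurable Φ)
    (𝔐 : Set (Measure X))
    (hprob : ∀ P ∈ 𝔐, IsProbabilityMeasure P)
    (hint : ∀ P ∈ 𝔐, Integrable Φ P)
    (hconv : ∀ P₀ ∈ 𝔐, ∀ P₁ ∈ 𝔐, ∀ t ∈ Set.Icc (0 : ℝ) 1,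
      (ENNReal.ofReal (1 - t) • P₀ + ENNReal.ofReal t • P₁) ∈ 𝔐)
    (hinj : ∀ P ∈ 𝔐, ∀ P' ∈ 𝔐, (∫ x, Φ x ∂P) = (∫ x, Φ x ∂P') → P = P')
    (P₀ : Measure X) (hP₀ : P₀ ∈ 𝔐) (P₁ : Measure X) (hP₁ : P₁ ∈ 𝔐)
    (t : ℝ) (ht : t ∈ Set.Icc (0 : ℝ) 1)
    (P : Measure X) (hP : P ∈ 𝔐)
    (h0 : ‖(∫ x, Φ x ∂P₀) - ∫ x, Φ x ∂P‖
        = t * ‖(∫ x, Φ x ∂P₀) - ∫ x, Φ x ∂P₁‖)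
    (h1 : ‖(∫ x, Φ x ∂P) - ∫ x, Φ x ∂P₁‖
        = (1 - t) * ‖(∫ x, Φ x ∂P₀) - ∫ x, Φ x ∂P₁‖) :
    P = ENNReal.ofReal (1 - t) • P₀ + ENNReal.ofReal t • P₁ :=
  mmd_geodesic_is_mixture_general Φ 𝔐 hint hconv hinj P₀ hP₀ P₁ hP₁ t ht P hP h0 h1
end

section
/- Let X₁, X₂, X₃ be Polish (standard Borel) spaces. Let μ₁₂ be a Borel probability measure on X₁ × X₂ and μ₂₃ a Borel probability measure on X₂ × X₃ such that the second marginal of μ₁₂ equals the first marginal of μ₂₃. Then there exists a Borel probability measure μ on X₁ × X₂ × X₃ such that the pushforward of μ under (x, y, z) ↦ (x, y) equals μ₁₂ and the pushforward of μ under (x, y, z) ↦ (y, z) equals μ₂₃. -/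
open MeasureTheory TopologicalSpace ProbabilityTheory
open scoped ProbabilityTheory

lemma aux_map_compProd {α β γ : Type*} [MeasurableSpace α] [MeasurableSpace β]
    [MeasurableSpace γ] (μ : Measure α) [SFinite μ] {f : α → β} (hf : Measurable f)
    (κ : ProbabilityTheory.Kernel β γ) [ProbabilityTheory.IsSFiniteKernel κ] :
    (μ ⊗ₘ κ.comap f hf).map (fun p => (f p.1, p.2)) = μ.map f ⊗ₘ κ := by
  ext s hs
  rw [Measure.map_apply (by fun_prop) hs, Measure.compProd_apply (hs.preimage (by fun_prop)),
    Measure.compProd_apply hs, lintegral_map (by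
      exact ProbabilityTheory.Kernel.measurable_kernel_prodMk_left hs) hf]
  rfl

/-- **Gluing lemma.**
Let `X₁, X₂, X₃` be Polish metric spaces, `μ₁₂` a Borel probability measure on
`X₁ × X₂` and `μ₂₃` a Borel probability measure on `X₂ × X₃` sharing the same marginal
on `X₂`. Then there is a Borel probability measure `μ` on `X₁ × X₂ × X₃` whose
`(1,2)`-marginal is `μ₁₂` and whose `(2,3)`-marginal is `μ₂₃`. -/
theorem gluing_lemma
    {X₁ X₂ X₃ : Type*}
    [MetricSpace X₁] [SeparableSpace X₁] [CompleteSpace X₁]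
    [MeasurableSpace X₁] [BorelSpace X₁]
    [MetricSpace X₂] [SeparableSpace X₂] [CompleteSpace X₂]
    [MeasurableSpace X₂] [BorelSpace X₂]
    [MetricSpace X₃] [SeparableSpace X₃] [CompleteSpace X₃]
    [MeasurableSpace X₃] [BorelSpace X₃]
    (μ₁₂ : Measure (X₁ × X₂)) [IsProbabilityMeasure μ₁₂]
    (μ₂₃ : Measure (X₂ × X₃)) [IsProbabilityMeasure μ₂₃]
    (h : μ₁₂.map Prod.snd = μ₂₃.map Prod.fst) :
    ∃ μ : Measure (X₁ × X₂ × X₃), IsProbabilityMeasure μ ∧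
      μ.map (fun q => (q.1, q.2.1)) = μ₁₂ ∧
      μ.map (fun q => q.2) = μ₂₃ := by
  have hne : Nonempty (X₂ × X₃) := by
    by_contra hc
    rw [not_nonempty_iff] at hc
    have h1 := measure_univ (μ := μ₂₃)
    simp [Set.univ_eq_empty_iff.mpr hc] at h1
  have : Nonempty X₃ := ⟨hne.some.2⟩
  set κ := μ₂₃.condKernel with hκ
  set ν := (μ₁₂ ⊗ₘ κ.comap Prod.snd measurable_snd) with hν
  refine ⟨ν.map (fun p => (p.1.1, p.1.2, p.2)), ?_, ?_, ?_⟩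
  · have : IsProbabilityMeasure ν := by infer_instance
    exact Measure.isProbabilityMeasure_map (by fun_prop)
  · rw [Measure.map_map (by fun_prop) (by fun_prop)]
    have : ((fun q : X₁ × X₂ × X₃ => (q.1, q.2.1)) ∘ fun p : (X₁ × X₂) × X₃ => (p.1.1, p.1.2, p.2))
        = Prod.fst := rfl
    rw [this]
    have := Measure.fst_compProd μ₁₂ (κ.comap Prod.snd measurable_snd)
    rw [Measure.fst] at this
    exact this
  · rw [Measure.map_map (by fun_prop) (by fun_prop)]
    have heq : ((fun q : X₁ × X₂ × X₃ => q.2) ∘ fun p : (X₁ × X₂) × X₃ => (p.1.1, p.1.2, p.2))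
        = fun p : (X₁ × X₂) × X₃ => (p.1.2, p.2) := rfl
    rw [heq, hν, aux_map_compProd μ₁₂ measurable_snd κ, h]
    have : μ₂₃.map Prod.fst = μ₂₃.fst := rfl
    rw [this, hκ, Measure.disintegrate]
end
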